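/- Let x_1, …, x_n be n real values and let (X_1, …, X_n) be uniformly distributed over all permutations of (x_1, …, x_n). Then X_1, …, X_n are negatively associated. -/

import Mathlib

/-!
Condition on the position `m` that receives a largest value `y j`. Within each such fiber the
remaining values are again uniformly permuted over one coordinate fewer, so by induction the
fiberwise sums satisfy `(n-1)! · C m ≤ A m · B m`, where `A`, `B`, `C` are the fiber sums of `f`,
`g`, `f g`. Moving the largest value to a coordinate outside `S` can only lower `f`, so `A` is
minimal at every `m ∉ S`, and likewise `B` at every `m ∉ T`. As `S` and `T` are disjoint, every
`m` minimises `A` or `B`; hence `A` and `B` antivary and Chebyshev's sum inequality finishes the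
induction.

Measurability of `σ` comes for free: since the outer measures of its fibers add up to `1`, each
fiber is null-measurable, which is all the integrals need.
-/

open MeasureTheory

/-- A function `f` on vectors depends only on coordinates in the set `S`. -/
def VecDependsOn {ι : Type*} (f : (ι → ℝ) → ℝ) (S : Set ι) : Prop :=
  ∀ x y : ι → ℝ, (∀ i ∈ S, x i = y i) → f x = f y

/-- Random variables `X i` are negatively associated: every two monotone increasing
functions defined on disjoint subsets of the variables are negatively correlated. -/
def NegAssoc {Ω ι : Type*} [MeasurableSpace Ω] (μ : Measure Ω) (X : ι → Ω → ℝ) : Prop :=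
  ∀ (S T : Set ι), Disjoint S T →
    ∀ f g : (ι → ℝ) → ℝ, Monotone f → Monotone g → VecDependsOn f S → VecDependsOn g T →
      ∫ ω, f (fun i => X i ω) * g (fun i => X i ω) ∂μ ≤
        (∫ ω, f (fun i => X i ω) ∂μ) * ∫ ω, g (fun i => X i ω) ∂μ

open Finset
open scoped Nat

section VecDependsOn

variable {ι : Type*} {f : (ι → ℝ) → ℝ} {S : Set ι}

theorem Monotone.le_of_vecDependsOn (hf : Monotone f) (hdf : VecDependsOn f S) {u v : ι → ℝ}
    (huv : ∀ i ∈ S, u i ≤ v i) : f u ≤ f v := by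
  classical
  calc f u = f (S.piecewise u v) := hdf _ _ fun i hi => by simp [hi]
    _ ≤ f v := hf fun i => by by_cases hi : i ∈ S <;> simp [hi, huv]

variable [DecidableEq ι] (m : ι) (c : ℝ)

theorem Monotone.comp_funSplitAt_symm (hf : Monotone f) :
    Monotone fun z => f ((Equiv.funSplitAt m ℝ).symm (c, z)) :=
  fun z w hzw => hf fun i => by by_cases h : i = m <;> simp [h, hzw _]

theorem VecDependsOn.comp_funSplitAt_symm (hdf : VecDependsOn f S) :
    VecDependsOn (fun z => f ((Equiv.funSplitAt m ℝ).symm (c, z))) (Subtype.val ⁻¹' S) :=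
  fun z w hzw => hdf _ _ fun i hi => by
    by_cases h : i = m
    · simp [h]
    · simp [h, hzw ⟨i, h⟩ hi]

end VecDependsOn

section Permutations

variable {α β : Type*} [DecidableEq α] [DecidableEq β]

def Equiv.restrictPunctured (m : α) (j : β) :
    {e : α ≃ β // e m = j} ≃ ({a // a ≠ m} ≃ {b // b ≠ j}) :=
  ((Equiv.optionSubtypeNe m).symm.equivCongr (Equiv.refl β)).subtypeEquiv
    (fun e => by simp) |>.trans (Equiv.optionSubtype j)

theorem Equiv.restrictPunctured_symm_apply (m : α) (j : β) (e : {a // a ≠ m} ≃ {b // b ≠ j})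
    (a : α) : ((Equiv.restrictPunctured m j).symm e : α ≃ β) a =
      if h : a = m then j else e ⟨a, h⟩ := by
  unfold Equiv.restrictPunctured
  by_cases h : a = m
  · subst h; simp
  · simp [h]

theorem Equiv.comp_restrictPunctured_symm {γ : Type*} (y : β → γ) (m : α) (j : β)
    (e : {a // a ≠ m} ≃ {b // b ≠ j}) :
    y ∘ ((Equiv.restrictPunctured m j).symm e : α ≃ β) =
      (Equiv.funSplitAt m γ).symm (y j, y ∘ Subtype.val ∘ e) := by
  ext a
  by_cases h : a = m <;> simp [Equiv.restrictPunctured_symm_apply, h]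

variable [Fintype α] [Fintype β] {M : Type*} [AddCommMonoid M]

theorem Equiv.sum_eq_sum_sum_apply_eq (j : β) (H : (α ≃ β) → M) :
    ∑ e, H e = ∑ m, ∑ e : α ≃ β with e m = j, H e := by
  rw [← Finset.sum_fiberwise univ (fun e : α ≃ β => e.symm j)]
  simp_rw [Equiv.symm_apply_eq, @eq_comm _ j]

theorem Equiv.sum_apply_eq_eq_sum_restrictPunctured (m : α) (j : β) (H : (α ≃ β) → M) :
    ∑ e : α ≃ β with e m = j, H e =
      ∑ e : {a // a ≠ m} ≃ {b // b ≠ j}, H ((Equiv.restrictPunctured m j).symm e) := by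
  rw [Finset.sum_subtype (p := fun e : α ≃ β => e m = j) _ (fun e => by simp)]
  exact ((Equiv.restrictPunctured m j).symm.sum_comp _).symm

theorem Equiv.sum_apply_eq_le_sum_apply_eq {y : β → ℝ} {j : β} (hj : ∀ b, y b ≤ y j)
    {f : (α → ℝ) → ℝ} {S : Set α} (hf : Monotone f) (hdf : VecDependsOn f S) {m' : α}
    (hm' : m' ∉ S) (m : α) :
    ∑ e : α ≃ β with e m' = j, f (y ∘ e) ≤ ∑ e : α ≃ β with e m = j, f (y ∘ e) := by
  calc ∑ e : α ≃ β with e m' = j, f (y ∘ e)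
      ≤ ∑ e : α ≃ β with e m' = j, f (y ∘ e ∘ Equiv.swap m m') := by
        refine sum_le_sum fun e he => hf.le_of_vecDependsOn hdf fun a ha => ?_
        have ham' : a ≠ m' := fun h => hm' (h ▸ ha)
        rcases eq_or_ne a m with rfl | ham
        · simpa [(mem_filter.mp he).2] using hj _
        · simp [Equiv.swap_apply_of_ne_of_ne ham ham']
    _ = ∑ e : α ≃ β with e m = j, f (y ∘ e) := by
        refine sum_equiv ((Equiv.swap m m').equivCongr (Equiv.refl β)) (fun e => ?_) ?_
        · simp
        · intro e _
          rfl

theorem Equiv.card_mul_sum_mul_le_sum_mul_sum (y : β → ℝ) {S T : Set α} (hST : Disjoint S T)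
    {f g : (α → ℝ) → ℝ} (hf : Monotone f) (hg : Monotone g) (hdf : VecDependsOn f S)
    (hdg : VecDependsOn g T) :
    (Fintype.card (α ≃ β) : ℝ) * ∑ e : α ≃ β, f (y ∘ e) * g (y ∘ e) ≤
      (∑ e : α ≃ β, f (y ∘ e)) * ∑ e : α ≃ β, g (y ∘ e) := by
  induction hn : Fintype.card α generalizing α β with
  | zero =>
    have : IsEmpty α := Fintype.card_eq_zero_iff.mp hn
    have hv : ∀ e : α ≃ β, y ∘ e = 0 := fun _ => Subsingleton.elim _ _
    simp only [hv, sum_const, Finset.card_univ, nsmul_eq_mul]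
    exact le_of_eq (by ring)
  | succ n ih =>
    rcases isEmpty_or_nonempty (α ≃ β) with _ | ⟨⟨e₀⟩⟩
    · simp
    have : Nonempty α := Fintype.card_pos_iff.mp (hn ▸ n.succ_pos)
    have : Nonempty β := ⟨e₀ (Classical.arbitrary α)⟩
    obtain ⟨j, hj⟩ := Finite.exists_max y
    set A : α → ℝ := fun m => ∑ e : α ≃ β with e m = j, f (y ∘ e)
    set B : α → ℝ := fun m => ∑ e : α ≃ β with e m = j, g (y ∘ e)
    set C : α → ℝ := fun m => ∑ e : α ≃ β with e m = j, f (y ∘ e) * g (y ∘ e)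
    have hcard_punctured : ∀ m : α, Fintype.card {a // a ≠ m} = n := by
      intro m
      simp [Fintype.card_subtype_compl, hn]
    have hfiber : ∀ m, (n ! : ℝ) * C m ≤ A m * B m := by
      intro m
      have e₁ := Equiv.restrictPunctured m j ⟨e₀.trans (Equiv.swap (e₀ m) j), by simp⟩
      simp only [A, B, C, Equiv.sum_apply_eq_eq_sum_restrictPunctured m j,
        Equiv.comp_restrictPunctured_symm]
      rw [← hcard_punctured m, ← Fintype.card_equiv e₁]
      exact ih (y ∘ Subtype.val) (hST.preimage _) (hf.comp_funSplitAt_symm m (y j))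
        (hg.comp_funSplitAt_symm m (y j)) (hdf.comp_funSplitAt_symm m (y j))
        (hdg.comp_funSplitAt_symm m (y j)) (hcard_punctured m)
    have hanti : Antivary A B := by
      intro i k hik
      by_cases hk : k ∈ S
      · exact absurd hik (not_lt.mpr
          (Equiv.sum_apply_eq_le_sum_apply_eq hj hg hdg (Set.disjoint_left.mp hST hk) i))
      · exact Equiv.sum_apply_eq_le_sum_apply_eq hj hf hdf hk i
    have hcard : (Fintype.card (α ≃ β) : ℝ) = Fintype.card α * n ! := by
      rw [Fintype.card_equiv e₀, hn, Nat.factorial_succ]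
      push_cast
      ring
    calc (Fintype.card (α ≃ β) : ℝ) * ∑ e : α ≃ β, f (y ∘ e) * g (y ∘ e)
        = Fintype.card α * ∑ m, n ! * C m := by
          rw [hcard, Equiv.sum_eq_sum_sum_apply_eq j, ← mul_sum, mul_assoc]
      _ ≤ Fintype.card α * ∑ m, A m * B m :=
          mul_le_mul_of_nonneg_left (sum_le_sum fun m _ => hfiber m) (Nat.cast_nonneg _)
      _ ≤ (∑ m, A m) * ∑ m, B m := hanti.card_mul_sum_le_sum_mul_sum
      _ = (∑ e : α ≃ β, f (y ∘ e)) * ∑ e : α ≃ β, g (y ∘ e) := by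
          rw [Equiv.sum_eq_sum_sum_apply_eq j, Equiv.sum_eq_sum_sum_apply_eq j (fun e => g _)]

theorem Equiv.inv_card_mul_sum_mul_le_mul (y : β → ℝ) {S T : Set α} (hST : Disjoint S T)
    {f g : (α → ℝ) → ℝ} (hf : Monotone f) (hg : Monotone g) (hdf : VecDependsOn f S)
    (hdg : VecDependsOn g T) :
    (Fintype.card (α ≃ β) : ℝ)⁻¹ * ∑ e : α ≃ β, f (y ∘ e) * g (y ∘ e) ≤
      ((Fintype.card (α ≃ β) : ℝ)⁻¹ * ∑ e : α ≃ β, f (y ∘ e)) *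
        ((Fintype.card (α ≃ β) : ℝ)⁻¹ * ∑ e : α ≃ β, g (y ∘ e)) := by
  set N : ℝ := (Fintype.card (α ≃ β) : ℝ)
  have hN₀ : 0 ≤ N := Nat.cast_nonneg _
  rcases hN₀.eq_or_lt with hN | hN
  · simp [← hN]
  calc N⁻¹ * ∑ e : α ≃ β, f (y ∘ e) * g (y ∘ e)
      ≤ N⁻¹ * (N⁻¹ * ((∑ e : α ≃ β, f (y ∘ e)) * ∑ e : α ≃ β, g (y ∘ e))) :=
        mul_le_mul_of_nonneg_left
          ((le_inv_mul_iff₀ hN).mpr (Equiv.card_mul_sum_mul_le_sum_mul_sum y hST hf hg hdf hdg))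
          (inv_nonneg.mpr hN.le)
    _ = (N⁻¹ * ∑ e : α ≃ β, f (y ∘ e)) * (N⁻¹ * ∑ e : α ≃ β, g (y ∘ e)) := by ring

end Permutations

section Fibers

variable {Ω : Type*} [MeasurableSpace Ω] {μ : Measure Ω}

theorem nullMeasurableSet_of_measure_add_measure_compl_le [IsFiniteMeasure μ] {s : Set Ω}
    (h : μ s + μ sᶜ ≤ μ Set.univ) : NullMeasurableSet s μ := by
  set t := toMeasurable μ s
  set t' := toMeasurable μ sᶜ
  have hcover : t ∪ t' = Set.univ := Set.eq_univ_of_univ_subset <|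
    (Set.union_compl_self s).symm.subset.trans <|
      Set.union_subset_union (subset_toMeasurable μ s) (subset_toMeasurable μ sᶜ)
  have hoverlap : μ (t ∩ t') = 0 := by
    have := measure_union_add_inter (μ := μ) t (measurableSet_toMeasurable μ sᶜ)
    rw [hcover, measure_toMeasurable, measure_toMeasurable] at this
    exact nonpos_iff_eq_zero.mp <| ENNReal.le_of_add_le_add_left (measure_ne_top μ _)
      (by rw [add_zero, this]; exact h)
  refine (measurableSet_toMeasurable μ s).nullMeasurableSet.congr (ae_eq_set.mpr ⟨?_, ?_⟩)
  · refine measure_mono_null (fun ω hω => ?_) hoverlap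
    exact ⟨hω.1, subset_toMeasurable μ sᶜ hω.2⟩
  · simp [Set.sdiff_eq_empty.mpr (subset_toMeasurable μ s)]

variable {ι : Type*} [Fintype ι] {σ : Ω → ι}

theorem nullMeasurableSet_fiber_of_sum_measure_le [IsFiniteMeasure μ]
    (hσ : ∑ i, μ {ω | σ ω = i} ≤ μ Set.univ) (i : ι) : NullMeasurableSet {ω | σ ω = i} μ := by
  classical
  refine nullMeasurableSet_of_measure_add_measure_compl_le ?_
  have hcompl : μ {ω | σ ω = i}ᶜ ≤ ∑ k ∈ univ.erase i, μ {ω | σ ω = k} :=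
    calc μ {ω | σ ω = i}ᶜ ≤ μ (⋃ k ∈ univ.erase i, {ω | σ ω = k}) :=
          measure_mono fun ω hω => Set.mem_biUnion (mem_erase.mpr ⟨hω, mem_univ _⟩) rfl
      _ ≤ ∑ k ∈ univ.erase i, μ {ω | σ ω = k} := measure_biUnion_finset_le _ _
  calc μ {ω | σ ω = i} + μ {ω | σ ω = i}ᶜ
      ≤ μ {ω | σ ω = i} + ∑ k ∈ univ.erase i, μ {ω | σ ω = k} := by gcongr
    _ = ∑ k, μ {ω | σ ω = k} := add_sum_erase univ (fun k => μ {ω | σ ω = k}) (mem_univ i)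
    _ ≤ μ Set.univ := hσ

theorem integral_comp_eq_sum_of_sum_measure_le [IsFiniteMeasure μ] {E : Type*}
    [NormedAddCommGroup E] [NormedSpace ℝ E] [CompleteSpace E]
    (hσ : ∑ i, μ {ω | σ ω = i} ≤ μ Set.univ) (F : ι → E) : ∫ ω, F (σ ω) ∂μ = ∑ i, μ.real {ω | σ ω = i} • F i := by
  classical
  have hfibers := nullMeasurableSet_fiber_of_sum_measure_le hσ
  have hF : (fun ω => F (σ ω)) = fun ω => ∑ i, {ω | σ ω = i}.indicator (fun _ => F i) ω := by
    funext ω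
    simp [Set.indicator_apply]
  rw [hF, integral_finsetSum _ fun i _ => (integrable_const (F i)).indicator₀ (hfibers i)]
  refine sum_congr rfl fun i _ => ?_
  rw [integral_indicator₀ (hfibers i), setIntegral_const]

theorem integral_comp_eq_inv_card_mul_sum [IsProbabilityMeasure μ]
    (hσ : ∀ i, μ {ω | σ ω = i} = (Fintype.card ι : ENNReal)⁻¹) (F : ι → ℝ) :
    ∫ ω, F (σ ω) ∂μ = (Fintype.card ι : ℝ)⁻¹ * ∑ i, F i := by
  have hsum : ∑ i, μ {ω | σ ω = i} ≤ μ Set.univ := by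
    simp only [hσ, sum_const, Finset.card_univ, nsmul_eq_mul, measure_univ]
    exact ENNReal.mul_inv_le_one _
  simp only [integral_comp_eq_sum_of_sum_measure_le hsum, measureReal_def, hσ, smul_eq_mul,
    ENNReal.toReal_inv, ENNReal.toReal_natCast, mul_sum]

end Fibers

/-- a uniformly random permutation of fixed values `x 1, …, x n` yields
negatively associated coordinates. -/
theorem permutation_distribution_NA
    {Ω : Type*} [MeasurableSpace Ω] (μ : Measure Ω) [IsProbabilityMeasure μ]
    (n : ℕ) (x : Fin n → ℝ) (σ : Ω → Equiv.Perm (Fin n))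
    (hσ : ∀ π : Equiv.Perm (Fin n), μ {ω | σ ω = π} = ((Nat.factorial n : ENNReal))⁻¹) :
    NegAssoc μ (fun (i : Fin n) (ω : Ω) => x (σ ω i)) := by
  intro S T hST f g hf hg hdf hdg
  have hσ' : ∀ π, μ {ω | σ ω = π} = (Fintype.card (Equiv.Perm (Fin n)) : ENNReal)⁻¹ := by
    simpa [Fintype.card_perm] using hσ
  rw [integral_comp_eq_inv_card_mul_sum hσ' fun π => f (fun i => x (π i)) * g (fun i => x (π i)),
    integral_comp_eq_inv_card_mul_sum hσ' fun π => f (fun i => x (π i)),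
    integral_comp_eq_inv_card_mul_sum hσ' fun π => g (fun i => x (π i))]
  exact Equiv.inv_card_mul_sum_mul_le_mul x hST hf hg hdf hdg
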